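/- arXiv:2011.12080 — 2 statements merged into one kernel-verified Lean document; each statement's English description precedes it below -/
import Mathlib

section
/- Let p and p+2 be prime with the modified two-prime sequence s_B of period N = p(p+2) as defined. Then -2·S_B(2)·T_B(2^{-1}) ≡ p(p+2) - 4·(2^{p(p+2)} - 1)/(2^{p+2} - 1) + 1 (mod 2^N - 1), given that the autocorrelation of s_B equals -1 at nonzero shifts τ ≡ 0 (mod p+2) and 3 at all other nonzero shifts. -/
/-- The modified two-prime sequence of period `p * (p + 2)`, with values in `{0, 1}`. -/
def modTwoPrimeSeq (p i : ℕ) : ℕ :=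
  if (i : ZMod (p + 2)) = 0 then 1
  else if (i : ZMod p) = 0 then 1
  else ((1 - jacobiSym (i : ℤ) p * jacobiSym (i : ℤ) (p + 2)) / 2).toNat

/-- The periodic autocorrelation of the modified two-prime sequence. -/
def autocorrB (p : ℕ) (τ : ℕ) : ℤ :=
  ∑ i ∈ Finset.range (p * (p + 2)),
    (-1 : ℤ) ^ (modTwoPrimeSeq p i + modTwoPrimeSeq p ((i + τ) % (p * (p + 2))))

/-!
Over `R = ZMod (2 ^ N - 1)` we have `2 ^ N = 1`, so `2` is a unit and `∑_{i<N} 2 ^ i = 0`.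
Since `s_B` is binary, `-2 s = (-1) ^ s - 1`, whence `-2 S_B(2) = T_B(2)`. Because `2 ^ N = 1`,
the product `T_B(2) T_B(2⁻¹)` is the generating polynomial `∑_τ C(τ) 2 ^ τ` of the periodic
autocorrelation `C`. Writing `C(τ) = 3 - 4 [p + 2 ∣ τ] + (N + 1) [τ = 0]`, the constant part
vanishes with the geometric sum, and the multiples of `p + 2` contribute
`∑_{k<p} 2 ^ {k (p + 2)} = (2 ^ N - 1) / (2 ^ {p + 2} - 1)`.
-/

open Finset

theorem Finset.sum_range_add_mod {M : Type*} [AddCommMonoid M] (N j : ℕ) (f : ℕ → M) :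
    ∑ τ ∈ range N, f ((j + τ) % N) = ∑ i ∈ range N, f i := by
  rcases N.eq_zero_or_pos with rfl | hN
  · simp
  -- `j + (N - j % N)` is a multiple of `N`, so adding `N - j % N` undoes the rotation by `j`
  have hcancel : ∀ τ < N, (j + τ + (N - j % N)) % N = τ := by
    intro τ hτ
    have h1 := Nat.mod_add_div j N
    have h2 := (Nat.mod_lt j hN).le
    have : j + τ + (N - j % N) = τ + N * (j / N + 1) := by rw [Nat.mul_succ]; omega
    rw [this, Nat.add_mul_mod_self_left, Nat.mod_eq_of_lt hτ]
  refine sum_nbij' (fun τ => (j + τ) % N) (fun i => (i + (N - j % N)) % N) ?_ ?_ ?_ ?_ ?_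
  · intro τ _; simpa using Nat.mod_lt _ hN
  · intro i _; simpa using Nat.mod_lt _ hN
  · intro τ hτ
    simpa [Nat.mod_add_mod] using hcancel τ (by simpa using hτ)
  · intro i hi
    simpa [Nat.add_mod_mod, add_assoc, add_left_comm] using hcancel i (by simpa using hi)
  · intro τ _; rfl

theorem sum_mul_sum_eq_sum_correlation {R : Type*} [CommSemiring R] {N : ℕ} {x y : R}
    (hxN : x ^ N = 1) (hxy : x * y = 1) (f g : ℕ → R) :
    (∑ i ∈ range N, f i * x ^ i) * (∑ j ∈ range N, g j * y ^ j) =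
      ∑ τ ∈ range N, (∑ j ∈ range N, f ((j + τ) % N) * g j) * x ^ τ := by
  have hshift : ∀ j τ, x ^ τ = x ^ ((j + τ) % N) * y ^ j := by
    intro j τ
    rw [← pow_eq_pow_mod _ hxN, pow_add, mul_right_comm, ← mul_pow, hxy, one_pow, one_mul]
  rw [sum_mul_sum, sum_comm]
  simp_rw [sum_mul, sum_comm (s := range N) (t := range N)
    (f := fun τ j => f ((j + τ) % N) * g j * x ^ τ)]
  refine sum_congr rfl fun j _ => ?_
  rw [← sum_range_add_mod N j]
  exact sum_congr rfl fun τ _ => by rw [hshift j τ]; ring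

theorem sum_range_mul_ite_dvd {M : Type*} [AddCommMonoid M] (p : ℕ) {q : ℕ} (hq : 0 < q)
    (f : ℕ → M) :
    ∑ τ ∈ range (p * q), (if q ∣ τ then f τ else 0) = ∑ k ∈ range p, f (k * q) := by
  have hmultiples : {τ ∈ range (p * q) | q ∣ τ} = (range p).image (· * q) := by
    ext τ
    simp only [mem_filter, mem_range, mem_image]
    constructor
    · rintro ⟨hτ, k, rfl⟩
      exact ⟨k, by nlinarith, mul_comm _ _⟩
    · rintro ⟨k, hk, rfl⟩
      exact ⟨by nlinarith, dvd_mul_left _ _⟩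
  rw [← sum_filter, hmultiples, sum_image fun a _ b _ h => Nat.eq_of_mul_eq_mul_right hq h]

theorem Int.pow_sub_one_ediv_sub_one {x : ℤ} (hx : x ≠ 1) (n : ℕ) :
    (x ^ n - 1) / (x - 1) = ∑ k ∈ Finset.range n, x ^ k := by
  rw [← geom_sum_mul, Int.mul_ediv_cancel _ (sub_ne_zero.2 hx)]

lemma modTwoPrimeSeq_eq_zero_or_eq_one (p i : ℕ) :
    modTwoPrimeSeq p i = 0 ∨ modTwoPrimeSeq p i = 1 := by
  unfold modTwoPrimeSeq
  split_ifs
  · exact .inr rfl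
  · exact .inr rfl
  · rcases jacobiSym.trichotomy (i : ℤ) p with h1 | h1 | h1 <;>
      rcases jacobiSym.trichotomy (i : ℤ) (p + 2) with h2 | h2 | h2 <;>
      simp [h1, h2]

lemma neg_two_mul_modTwoPrimeSeq {R : Type*} [CommRing R] (p i : ℕ) :
    -2 * (modTwoPrimeSeq p i : R) = (-1) ^ modTwoPrimeSeq p i - 1 := by
  rcases modTwoPrimeSeq_eq_zero_or_eq_one p i with h | h <;> rw [h] <;> norm_num

lemma autocorrB_zero (p : ℕ) : autocorrB p 0 = p * (p + 2) := by
  have hterm : ∀ i ∈ range (p * (p + 2)),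
      (-1 : ℤ) ^ (modTwoPrimeSeq p i + modTwoPrimeSeq p ((i + 0) % (p * (p + 2)))) = 1 := by
    intro i hi
    rw [Nat.add_zero, Nat.mod_eq_of_lt (mem_range.mp hi)]
    exact Even.neg_one_pow ⟨_, rfl⟩
  rw [autocorrB, sum_congr rfl hterm]
  simp

lemma intCast_autocorrB {R : Type*} [CommRing R] (p τ : ℕ) :
    (autocorrB p τ : R) = ∑ j ∈ range (p * (p + 2)),
      (-1) ^ modTwoPrimeSeq p ((j + τ) % (p * (p + 2))) * (-1) ^ modTwoPrimeSeq p j := by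
  push_cast [autocorrB, pow_add]
  exact sum_congr rfl fun j _ => mul_comm _ _

lemma sum_autocorrB_mul_pow {R : Type*} [CommRing R] {p : ℕ} (hp : 0 < p)
    (hauto : ∀ τ, 0 < τ → τ < p * (p + 2) →
      (τ % (p + 2) = 0 → autocorrB p τ = -1) ∧ (τ % (p + 2) ≠ 0 → autocorrB p τ = 3))
    (x : R) :
    ∑ τ ∈ range (p * (p + 2)), (autocorrB p τ : R) * x ^ τ =
      p * (p + 2) + 1 + 3 * ∑ τ ∈ range (p * (p + 2)), x ^ τ -
        4 * ∑ k ∈ range p, (x ^ (p + 2)) ^ k := by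
  have hvalue : ∀ τ ∈ range (p * (p + 2)), (autocorrB p τ : R) * x ^ τ =
      3 * x ^ τ - 4 * (if p + 2 ∣ τ then x ^ τ else 0) +
        if τ = 0 then (p * (p + 2) + 1 : R) else 0 := by
    intro τ hτ
    rcases Nat.eq_zero_or_pos τ with rfl | hτ0
    · rw [autocorrB_zero, if_pos (dvd_zero _), if_pos rfl]
      push_cast
      ring
    obtain ⟨hmultiple, hnonmultiple⟩ := hauto τ hτ0 (mem_range.mp hτ)
    by_cases hd : p + 2 ∣ τ
    · rw [hmultiple (Nat.mod_eq_zero_of_dvd hd), if_pos hd, if_neg hτ0.ne']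
      push_cast
      ring
    · rw [hnonmultiple (mt Nat.dvd_of_mod_eq_zero hd), if_neg hd, if_neg hτ0.ne']
      push_cast
      ring
  rw [sum_congr rfl hvalue, sum_add_distrib, sum_sub_distrib, ← mul_sum, ← mul_sum,
    sum_range_mul_ite_dvd p (by omega : 0 < p + 2), sum_ite_eq',
    if_pos (mem_range.2 (by positivity))]
  simp_rw [pow_mul']
  ring

theorem stmt_15_general (p : ℕ) (hp : p.Prime)
    (N : ℕ) (hN : N = p * (p + 2))
    (hauto : ∀ τ, 0 < τ → τ < N →
      (τ % (p + 2) = 0 → autocorrB p τ = -1) ∧ (τ % (p + 2) ≠ 0 → autocorrB p τ = 3)) :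
    (-2 : ZMod (2 ^ N - 1)) *
        (∑ i ∈ Finset.range N, (modTwoPrimeSeq p i : ZMod (2 ^ N - 1)) * 2 ^ i) *
        (∑ i ∈ Finset.range N,
          (-1 : ZMod (2 ^ N - 1)) ^ (modTwoPrimeSeq p i) * ((2 : ZMod (2 ^ N - 1))⁻¹) ^ i) =
      (((p * (p + 2) : ℤ) - 4 * ((2 ^ (p * (p + 2)) - 1) / (2 ^ (p + 2) - 1)) + 1 : ℤ) :
        ZMod (2 ^ N - 1)) := by
  subst hN
  set R := ZMod (2 ^ (p * (p + 2)) - 1)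
  have h2N : (2 : R) ^ (p * (p + 2)) = 1 := by
    have h := ZMod.natCast_self (2 ^ (p * (p + 2)) - 1)
    rw [Nat.cast_sub Nat.one_le_two_pow] at h
    push_cast at h
    exact sub_eq_zero.mp h
  have h2inv : (2 : R) * 2⁻¹ = 1 :=
    ZMod.mul_inv_of_unit _ (IsUnit.of_pow_eq_one h2N (Nat.mul_pos hp.pos (by omega)).ne')
  have hgeom : ∑ i ∈ range (p * (p + 2)), (2 : R) ^ i = 0 := by
    have h := geom_sum_mul (2 : R) (p * (p + 2))
    rwa [h2N, sub_self, show (2 : R) - 1 = 1 by norm_num, mul_one] at h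
  have hS : (-2 : R) * ∑ i ∈ range (p * (p + 2)), (modTwoPrimeSeq p i : R) * 2 ^ i =
      ∑ i ∈ range (p * (p + 2)), (-1) ^ modTwoPrimeSeq p i * 2 ^ i := by
    rw [mul_sum]
    simp_rw [← mul_assoc, neg_two_mul_modTwoPrimeSeq, sub_mul, sum_sub_distrib, one_mul,
      hgeom, sub_zero]
  rw [hS, sum_mul_sum_eq_sum_correlation h2N h2inv]
  simp_rw [← intCast_autocorrB]
  rw [sum_autocorrB_mul_pow hp.pos hauto, hgeom, pow_mul' (2 : ℤ) p (p + 2),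
    Int.pow_sub_one_ediv_sub_one (one_lt_pow₀ one_lt_two (by omega)).ne']
  push_cast
  ring

theorem stmt_15 (p : ℕ) (hp : p.Prime) (hodd : Odd p) (hp2 : (p + 2).Prime)
    (N : ℕ) (hN : N = p * (p + 2))
    (hauto : ∀ τ, 0 < τ → τ < N →
      (τ % (p + 2) = 0 → autocorrB p τ = -1) ∧ (τ % (p + 2) ≠ 0 → autocorrB p τ = 3)) :
    (-2 : ZMod (2 ^ N - 1)) *
        (∑ i ∈ Finset.range N, (modTwoPrimeSeq p i : ZMod (2 ^ N - 1)) * 2 ^ i) *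
        (∑ i ∈ Finset.range N,
          (-1 : ZMod (2 ^ N - 1)) ^ (modTwoPrimeSeq p i) * ((2 : ZMod (2 ^ N - 1))⁻¹) ^ i) =
      (((p * (p + 2) : ℤ) - 4 * ((2 ^ (p * (p + 2)) - 1) / (2 ^ (p + 2) - 1)) + 1 : ℤ) :
        ZMod (2 ^ N - 1)) :=
  stmt_15_general p hp N hN hauto
end

section
/- Let k ≥ 2 and let s_A be a binary sequence of period N_A = 2^{2k} - 1 whose autocorrelation satisfies C_{s_A}(τ) = -1 for nonzero τ divisible by 2^k + 1 and C_{s_A}(τ) = 3 otherwise (τ ≠ 0). Then the 2-adic complexity satisfies Φ_2(s_A) ≥ log_2(2^{N_A} - 1) - 2·log_2(2^{k-1} - 1) > (2^{2k} - 1) - 1 - 2(k - 1) > N_A / 2. -/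
/-!
Put `T(x) = ∑ (-1)^(sᵢ) xⁱ` and `g = gcd(S(2), 2^N - 1)`. Modulo `g` we have `2^N = 1` and
`T(2) = ∑ 2ⁱ - 2 S(2) = 0`, while `T(2) T(2⁻¹) = ∑_τ C(τ) 2^τ`. Since `N = (2^k + 1)(2^k - 1)`,
the two-valued autocorrelation turns this into `2^(2k) ≡ 4 ∑_{j < 2^k - 1} 2^((2^k + 1) j)`.
Multiplying by `2^(2^k + 1) - 1` gives `2^(2^k + 1) ≡ 1`, so the sum is `≡ 2^k - 1` and
`4 (2^(k-1) - 1)^2 = 2^(2k) - 4 (2^k - 1) ≡ 0`; as `2` is invertible mod `g`,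
`g ∣ (2^(k-1) - 1)^2`. The bounds on `Φ₂` are then elementary estimates of logarithms.
-/

open Finset

theorem Function.Periodic.sum_range_add {M : Type*} [AddCommMonoid M] {f : ℕ → M} {N : ℕ}
    (hf : Function.Periodic f N) (j : ℕ) :
    ∑ τ ∈ range N, f (τ + j) = ∑ τ ∈ range N, f τ := by
  induction j with
  | zero => rfl
  | succ j ih =>
    rcases N with _ | N
    · simp
    rw [← ih, sum_range_succ, sum_range_succ', zero_add,
      show N + (j + 1) = j + (N + 1) by ring, hf]
    simp only [add_assoc, add_comm 1 j]

theorem sum_range_comp_add_mod {M : Type*} [AddCommMonoid M] (g : ℕ → M) (N j : ℕ) :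
    ∑ τ ∈ range N, g ((j + τ) % N) = ∑ i ∈ range N, g i := by
  have hper : Function.Periodic (fun i ↦ g (i % N)) N := fun i ↦ by simp
  calc ∑ τ ∈ range N, g ((j + τ) % N) = ∑ τ ∈ range N, g ((τ + j) % N) := by
        simp only [add_comm j]
    _ = ∑ i ∈ range N, g (i % N) := hper.sum_range_add j
    _ = ∑ i ∈ range N, g i :=
        sum_congr rfl fun i hi ↦ by rw [Nat.mod_eq_of_lt (mem_range.mp hi)]

theorem sum_mul_sum_pow_sub_eq_sum_autocorrelation {R : Type*} [CommRing R] {x : R} {N : ℕ}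
    (hx : x ^ N = 1) (a : ℕ → R) :
    (∑ i ∈ range N, a i * x ^ i) * (∑ j ∈ range N, a j * x ^ (N - j)) =
      ∑ τ ∈ range N, (∑ j ∈ range N, a j * a ((j + τ) % N)) * x ^ τ := by
  simp_rw [sum_mul_sum, sum_mul]
  rw [sum_comm]
  conv_rhs => rw [sum_comm]
  refine sum_congr rfl fun j hj ↦ ?_
  have hjN : j ≤ N := (mem_range.mp hj).le
  have hexp : ∀ τ, x ^ ((j + τ) % N + (N - j)) = x ^ τ := fun τ ↦ by
    rw [pow_eq_pow_mod _ hx, pow_eq_pow_mod τ hx, Nat.mod_add_mod,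
      show j + τ + (N - j) = τ + N by omega, Nat.add_mod_right]
  rw [← sum_range_comp_add_mod (fun i ↦ a i * x ^ i * (a j * x ^ (N - j))) N j]
  refine sum_congr rfl fun τ _ ↦ ?_
  rw [← hexp τ, pow_add]
  ring

theorem sum_range_mul_filter_dvd {M : Type*} [AddCommMonoid M] (f : ℕ → M) {m : ℕ}
    (hm : 0 < m) (n : ℕ) : ∑ τ ∈ range (m * n) with m ∣ τ, f τ = ∑ j ∈ range n, f (m * j) := by
  have hmul : {τ ∈ range (m * n) | m ∣ τ} = (range n).image (m * ·) := by
    ext τ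
    simp only [mem_filter, mem_range, mem_image]
    constructor
    · rintro ⟨hτ, j, rfl⟩
      exact ⟨j, Nat.lt_of_mul_lt_mul_left hτ, rfl⟩
    · rintro ⟨j, hj, rfl⟩
      exact ⟨Nat.mul_lt_mul_of_pos_left hj hm, dvd_mul_right m j⟩
  rw [hmul, sum_image fun i _ j _ h ↦ Nat.eq_of_mul_eq_mul_left hm h]

theorem sum_mul_pow_eq_of_two_valued {R : Type*} [CommRing R] (x : R) {N m n : ℕ}
    (hN : N = m * n) (hm : 0 < m) (hn : 0 < n) (c : ℕ → R) (hc0 : c 0 = N)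
    (hc : ∀ τ, 0 < τ → τ < N → c τ = if m ∣ τ then -1 else 3) :
    ∑ τ ∈ range N, c τ * x ^ τ =
      (N + 1 : R) - 4 * ∑ j ∈ range n, (x ^ m) ^ j + 3 * ∑ τ ∈ range N, x ^ τ := by
  have hc' : ∀ τ ∈ range N, c τ * x ^ τ =
      (if τ = 0 then (N + 1 : R) * x ^ τ else 0) - (if m ∣ τ then 4 * x ^ τ else 0) +
        3 * x ^ τ := by
    intro τ hτ
    rcases Nat.eq_zero_or_pos τ with rfl | hτ0
    · simp only [hc0, if_pos, dvd_zero]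
      ring
    · rw [hc τ hτ0 (mem_range.mp hτ), if_neg hτ0.ne']
      split_ifs <;> ring
  rw [sum_congr rfl hc', sum_add_distrib, sum_sub_distrib, sum_ite_eq',
    if_pos (mem_range.mpr (hN ▸ Nat.mul_pos hm hn)), ← sum_filter, hN,
    sum_range_mul_filter_dvd _ hm, ← mul_sum, ← mul_sum]
  simp only [pow_zero, mul_one, pow_mul]

theorem sq_two_pow_pred_sub_one_eq_zero {R : Type*} [CommRing R] {k : ℕ} (hk : 1 ≤ k)
    (h2 : (2 : R) ^ ((2 ^ k + 1) * (2 ^ k - 1)) = 1)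
    (hsum : (2 : R) ^ (2 * k) = 4 * ∑ j ∈ range (2 ^ k - 1), ((2 : R) ^ (2 ^ k + 1)) ^ j) :
    ((2 : R) ^ (k - 1) - 1) ^ 2 = 0 := by
  obtain ⟨k, rfl⟩ : ∃ k', k = k' + 1 := ⟨k - 1, by omega⟩
  have hunit : IsUnit (2 : R) := IsUnit.of_pow_eq_one h2
    (Nat.mul_pos (by positivity) (Nat.sub_pos_of_lt (Nat.one_lt_two_pow (by omega)))).ne'
  have hm : (2 : R) ^ (2 ^ (k + 1) + 1) = 1 := by
    have h : (2 : R) ^ (2 * (k + 1)) * ((2 : R) ^ (2 ^ (k + 1) + 1) - 1) = 0 := by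
      rw [hsum, mul_assoc, geom_sum_mul, ← pow_mul, h2, sub_self, mul_zero]
    rwa [(hunit.pow _).mul_right_eq_zero, sub_eq_zero] at h
  have hcast : ((2 ^ (k + 1) - 1 : ℕ) : R) = 2 ^ (k + 1) - 1 := by
    rw [Nat.cast_sub Nat.one_le_two_pow]; push_cast; ring
  simp only [hm, one_pow, sum_const, card_range, nsmul_eq_mul, mul_one, hcast] at hsum
  have h4 : (4 : R) * ((2 : R) ^ k - 1) ^ 2 = 0 := by
    linear_combination hsum
  simpa using (hunit.pow 2).mul_right_eq_zero.mp (by linear_combination h4)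

/-- The autocorrelation `C_s(τ)` of the paper; only `s 0, …, s (N - 1)` enter. -/
def autocorrelation (s : ℕ → ℕ) (N τ : ℕ) : ℤ :=
  ∑ i ∈ range N, (-1 : ℤ) ^ (s i + s ((i + τ) % N))

theorem autocorrelation_zero (s : ℕ → ℕ) (N : ℕ) : autocorrelation s N 0 = N := by
  calc autocorrelation s N 0 = ∑ i ∈ range N, (1 : ℤ) :=
        sum_congr rfl fun i hi ↦ by
          rw [add_zero, Nat.mod_eq_of_lt (mem_range.mp hi)]
          exact Even.neg_one_pow ⟨s i, rfl⟩
    _ = N := by simp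

theorem sum_neg_one_pow_mul_sum_eq_sum_autocorrelation {R : Type*} [CommRing R] {x : R}
    {N : ℕ} (hx : x ^ N = 1) (s : ℕ → ℕ) :
    (∑ i ∈ range N, (-1 : R) ^ s i * x ^ i) * (∑ j ∈ range N, (-1 : R) ^ s j * x ^ (N - j)) =
      ∑ τ ∈ range N, (autocorrelation s N τ : R) * x ^ τ := by
  simp only [sum_mul_sum_pow_sub_eq_sum_autocorrelation hx, autocorrelation, ← pow_add,
    Int.cast_sum, Int.cast_pow, Int.cast_neg, Int.cast_one]

theorem sum_neg_one_pow_mul_pow_eq_sub {R : Type*} [CommRing R] (x : R) {s : ℕ → ℕ}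
    (hs : ∀ i, s i ≤ 1) (N : ℕ) :
    ∑ i ∈ range N, (-1 : R) ^ s i * x ^ i =
      ∑ i ∈ range N, x ^ i - 2 * ∑ i ∈ range N, (s i : R) * x ^ i := by
  rw [mul_sum, ← sum_sub_distrib]
  refine sum_congr rfl fun i _ ↦ ?_
  rcases Nat.le_one_iff_eq_zero_or_eq_one.mp (hs i) with h | h <;>
    · rw [h]; push_cast; ring

theorem sq_two_pow_pred_sub_one_eq_zero_of_autocorrelation {R : Type*} [CommRing R] {k : ℕ}
    (hk : 1 ≤ k) {N : ℕ} (hN : N = 2 ^ (2 * k) - 1) {s : ℕ → ℕ} (hs : ∀ i, s i ≤ 1)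
    (hauto : ∀ τ, 0 < τ → τ < N →
      autocorrelation s N τ = if 2 ^ k + 1 ∣ τ then -1 else 3)
    (h2N : (2 : R) ^ N = 1) (hS : ∑ i ∈ range N, (s i : R) * 2 ^ i = 0) :
    ((2 : R) ^ (k - 1) - 1) ^ 2 = 0 := by
  have hgeom : ∑ i ∈ range N, (2 : R) ^ i = 0 := by
    have h := geom_sum_mul (2 : R) N
    rwa [h2N, sub_self, show (2 : R) - 1 = 1 by norm_num, mul_one] at h
  have hT : ∑ i ∈ range N, (-1 : R) ^ s i * 2 ^ i = 0 := by
    rw [sum_neg_one_pow_mul_pow_eq_sub _ hs, hgeom, hS, mul_zero, sub_zero]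
  have hmn : N = (2 ^ k + 1) * (2 ^ k - 1) := by
    rw [hN, ← Nat.mul_self_sub_mul_self_eq, one_mul, ← pow_add, two_mul]
  have hcorr := sum_neg_one_pow_mul_sum_eq_sum_autocorrelation h2N s
  rw [hT, zero_mul, sum_mul_pow_eq_of_two_valued _ hmn (by positivity)
    (Nat.sub_pos_of_lt (Nat.one_lt_two_pow (by omega))) _
    (by rw [autocorrelation_zero, Int.cast_natCast])
    (fun τ hτ0 hτN ↦ by rw [hauto τ hτ0 hτN]; split_ifs <;> simp), hgeom] at hcorr
  have hN1 : (N : R) + 1 = 2 ^ (2 * k) := by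
    rw [hN, Nat.cast_sub Nat.one_le_two_pow]
    push_cast
    ring
  rw [hmn] at h2N
  exact sq_two_pow_pred_sub_one_eq_zero hk h2N (by linear_combination -hN1 - hcorr)

theorem gcd_dvd_sq_of_autocorrelation_two_valued {k : ℕ} (hk : 1 ≤ k) {N : ℕ}
    (hN : N = 2 ^ (2 * k) - 1) {s : ℕ → ℕ} (hs : ∀ i, s i ≤ 1)
    (hauto : ∀ τ, 0 < τ → τ < N →
      autocorrelation s N τ = if 2 ^ k + 1 ∣ τ then -1 else 3) :
    Nat.gcd (∑ i ∈ range N, s i * 2 ^ i) (2 ^ N - 1) ∣ (2 ^ (k - 1) - 1) ^ 2 := by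
  set g := Nat.gcd (∑ i ∈ range N, s i * 2 ^ i) (2 ^ N - 1)
  have h2N : (2 : ZMod g) ^ N = 1 := by
    have h := (ZMod.natCast_eq_zero_iff _ g).mpr (Nat.gcd_dvd_right _ _)
    rwa [Nat.cast_sub Nat.one_le_two_pow, sub_eq_zero, Nat.cast_pow, Nat.cast_ofNat,
      Nat.cast_one] at h
  have hS := (ZMod.natCast_eq_zero_iff _ g).mpr (Nat.gcd_dvd_left (∑ i ∈ range N, s i * 2 ^ i) _)
  push_cast at hS
  rw [← ZMod.natCast_eq_zero_iff]
  push_cast [Nat.one_le_two_pow]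
  exact sq_two_pow_pred_sub_one_eq_zero_of_autocorrelation hk hN hs hauto h2N hS

theorem four_mul_lt_two_pow_two_mul {k : ℕ} (hk : 2 ≤ k) : 4 * k < 2 ^ (2 * k) := by
  rw [two_mul, pow_add]
  nlinarith [Nat.lt_two_pow_self (n := k), Nat.pow_le_pow_right two_pos hk]

namespace Real

theorem logb_two_pow_sub_one_lt {n : ℕ} (hn : 0 < n) : logb 2 (2 ^ n - 1) < n := by
  have h1 : (1 : ℝ) < 2 ^ n := one_lt_pow₀ one_lt_two hn.ne'
  rw [logb_lt_iff_lt_rpow one_lt_two (by linarith), rpow_natCast]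
  linarith

theorem sub_one_lt_logb_two_pow_sub_one {n : ℕ} (hn : 2 ≤ n) :
    (n : ℝ) - 1 < logb 2 (2 ^ n - 1) := by
  obtain ⟨n, rfl⟩ : ∃ n', n = n' + 1 := ⟨n - 1, by omega⟩
  have h1 : (1 : ℝ) < 2 ^ n := one_lt_pow₀ one_lt_two (by omega)
  rw [lt_logb_iff_rpow_lt one_lt_two (by rw [pow_succ]; linarith), Nat.cast_add_one,
    add_sub_cancel_right, rpow_natCast, pow_succ]
  linarith

theorem logb_sub_two_mul_logb_le_logb_div {b A B g : ℝ} (hb : 1 < b) (hA : A ≠ 0) (hg : 0 < g)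
    (hgB : g ≤ B ^ 2) : logb b A - 2 * logb b B ≤ logb b (A / g) := by
  rw [logb_div hA hg.ne', ← Nat.cast_ofNat, ← logb_pow]
  gcongr

end Real

theorem stmt_18_general (k : ℕ) (hk : 2 ≤ k) (N : ℕ) (hN : N = 2 ^ (2 * k) - 1)
    (s : ℕ → ℕ) (hs : ∀ i, s i ≤ 1)
    (hauto : ∀ τ, 0 < τ → τ < N →
      ((τ % (2 ^ k + 1) = 0 →
          (∑ i ∈ Finset.range N, (-1 : ℤ) ^ (s i + s ((i + τ) % N))) = -1) ∧
        (τ % (2 ^ k + 1) ≠ 0 →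
          (∑ i ∈ Finset.range N, (-1 : ℤ) ^ (s i + s ((i + τ) % N))) = 3))) :
    Real.logb 2 ((2 ^ N - 1 : ℝ) /
        (Nat.gcd (∑ i ∈ Finset.range N, s i * 2 ^ i) (2 ^ N - 1) : ℝ)) ≥
      Real.logb 2 ((2 : ℝ) ^ N - 1) - 2 * Real.logb 2 ((2 : ℝ) ^ (k - 1) - 1) ∧
    Real.logb 2 ((2 : ℝ) ^ N - 1) - 2 * Real.logb 2 ((2 : ℝ) ^ (k - 1) - 1) >
      ((2 : ℝ) ^ (2 * k) - 1) - 1 - 2 * ((k : ℝ) - 1) ∧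
    ((2 : ℝ) ^ (2 * k) - 1) - 1 - 2 * ((k : ℝ) - 1) > (N : ℝ) / 2 := by
  have hdvd := gcd_dvd_sq_of_autocorrelation_two_valued (by omega) hN hs fun τ hτ0 hτN ↦ by
    obtain ⟨hmul, hnot_mul⟩ := hauto τ hτ0 hτN
    split_ifs with h
    · exact hmul (Nat.mod_eq_zero_of_dvd h)
    · exact hnot_mul (mt Nat.dvd_of_mod_eq_zero h)
  set g := Nat.gcd (∑ i ∈ Finset.range N, s i * 2 ^ i) (2 ^ N - 1)
  have hsq_pos : 0 < (2 ^ (k - 1) - 1) ^ 2 :=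
    pow_pos (Nat.sub_pos_of_lt (Nat.one_lt_two_pow (by omega))) 2
  have hN2 : 2 ≤ N := by
    have : 2 ^ 2 ≤ 2 ^ (2 * k) := Nat.pow_le_pow_right two_pos (by omega)
    omega
  have hNR : (N : ℝ) = 2 ^ (2 * k) - 1 := by
    rw [hN, Nat.cast_sub Nat.one_le_two_pow]
    push_cast
    ring
  refine ⟨Real.logb_sub_two_mul_logb_le_logb_div one_lt_two ?_ ?_ ?_, ?_, ?_⟩
  · exact (sub_pos.mpr (one_lt_pow₀ one_lt_two (by omega))).ne'
  · exact_mod_cast Nat.pos_of_dvd_of_pos hdvd hsq_pos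
  · have hle : (g : ℝ) ≤ ((2 ^ (k - 1) - 1) ^ 2 : ℕ) := by
      exact_mod_cast Nat.le_of_dvd hsq_pos hdvd
    push_cast [Nat.one_le_two_pow] at hle
    exact hle
  · have := Real.sub_one_lt_logb_two_pow_sub_one hN2
    have := Real.logb_two_pow_sub_one_lt (n := k - 1) (by omega)
    rw [Nat.cast_sub (by omega), Nat.cast_one] at this
    linarith
  · have : (4 * k : ℝ) < 2 ^ (2 * k) := by exact_mod_cast four_mul_lt_two_pow_two_mul hk
    linarith

theorem stmt_18 (k : ℕ) (hk : 2 ≤ k) (N : ℕ) (hN : N = 2 ^ (2 * k) - 1)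
    (s : ℕ → ℕ) (hs : ∀ i, s i ≤ 1) (hper : ∀ i, s (i + N) = s i)
    (hauto : ∀ τ, 0 < τ → τ < N →
      ((τ % (2 ^ k + 1) = 0 →
          (∑ i ∈ Finset.range N, (-1 : ℤ) ^ (s i + s ((i + τ) % N))) = -1) ∧
        (τ % (2 ^ k + 1) ≠ 0 →
          (∑ i ∈ Finset.range N, (-1 : ℤ) ^ (s i + s ((i + τ) % N))) = 3))) :
    Real.logb 2 ((2 ^ N - 1 : ℝ) /
        (Nat.gcd (∑ i ∈ Finset.range N, s i * 2 ^ i) (2 ^ N - 1) : ℝ)) ≥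
      Real.logb 2 ((2 : ℝ) ^ N - 1) - 2 * Real.logb 2 ((2 : ℝ) ^ (k - 1) - 1) ∧
    Real.logb 2 ((2 : ℝ) ^ N - 1) - 2 * Real.logb 2 ((2 : ℝ) ^ (k - 1) - 1) >
      ((2 : ℝ) ^ (2 * k) - 1) - 1 - 2 * ((k : ℝ) - 1) ∧
    ((2 : ℝ) ^ (2 * k) - 1) - 1 - 2 * ((k : ℝ) - 1) > (N : ℝ) / 2 :=
  stmt_18_general k hk N hN s hs hauto
end
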